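/- arXiv:1503.02859 — 5 statements merged into one kernel-verified Lean document; each statement's English description precedes it below -/
import Mathlib

section
/- The dimension of a simple game v is at most the number of its maximal losing coalitions. -/
def IsSimpleGame {N : Type*} [Fintype N] (v : Finset N → Prop) : Prop :=
  (∀ S T : Finset N, S ⊆ T → v S → v T) ∧ ¬ v ∅ ∧ v Finset.univ

def IsWeighted {N : Type*} [Fintype N] (v : Finset N → Prop) : Prop :=
  ∃ (w : N → ℝ) (q : ℝ), 0 < q ∧ (∀ i, 0 ≤ w i) ∧ ∀ S : Finset N, v S ↔ q ≤ ∑ i ∈ S, w i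

def IsMaxLosing {N : Type*} [Fintype N] (v : Finset N → Prop) (T : Finset N) : Prop :=
  ¬ v T ∧ ∀ T' : Finset N, T ⊂ T' → v T'

def IsMinWinning {N : Type*} [Fintype N] (v : Finset N → Prop) (S : Finset N) : Prop :=
  v S ∧ ∀ S' : Finset N, S' ⊂ S → ¬ v S'

/-!
Every losing coalition lies in a maximal losing one, so for a monotone game a coalition wins iff it
is contained in no maximal losing coalition `T`. Each condition `¬ S ⊆ T` is a weighted game: give
weight `1` to the players outside `T` and set the quota to `1`.
-/

section MaxLosing

variable {N : Type*} [Fintype N]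

theorem exists_superset_isMaxLosing {v : Finset N → Prop} {S : Finset N} (hS : ¬ v S) :
    ∃ T, S ⊆ T ∧ IsMaxLosing v T := by
  obtain ⟨T, hST, hmax⟩ :=
    Finite.exists_le_maximal (p := fun T => S ⊆ T ∧ ¬ v T) ⟨subset_rfl, hS⟩
  refine ⟨T, hST, hmax.1.2, fun T' hTT' => ?_⟩
  by_contra hT'
  exact hTT'.not_subset (hmax.2 ⟨hST.trans hTT'.subset, hT'⟩ hTT'.subset)

theorem iff_forall_isMaxLosing_not_subset {v : Finset N → Prop} (hv : Monotone v) (S : Finset N) :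
    v S ↔ ∀ T, IsMaxLosing v T → ¬ S ⊆ T := by
  refine ⟨fun hS T hT hST => hT.1 (hv hST hS), fun h => ?_⟩
  by_contra hS
  obtain ⟨T, hST, hT⟩ := exists_superset_isMaxLosing hS
  exact h T hT hST

end MaxLosing

theorem isWeighted_not_subset {N : Type*} [Fintype N] (T : Finset N) :
    IsWeighted fun S => ¬ S ⊆ T := by
  classical
  refine ⟨fun i => if i ∈ T then 0 else 1, 1, one_pos, fun i => by positivity, fun S => ?_⟩
  constructor
  · intro hS
    obtain ⟨i, hiS, hiT⟩ := Finset.not_subset.mp hS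
    calc (1 : ℝ) = if i ∈ T then 0 else 1 := by simp [hiT]
      _ ≤ ∑ j ∈ S, if j ∈ T then (0 : ℝ) else 1 :=
        Finset.single_le_sum (f := fun j => if j ∈ T then (0 : ℝ) else 1)
          (fun j _ => by positivity) hiS
  · intro hquota hST
    have hzero : ∑ j ∈ S, (if j ∈ T then (0 : ℝ) else 1) = 0 :=
      Finset.sum_eq_zero fun j hj => if_pos (hST hj)
    linarith

theorem dimension_le_card_maximal_losing_general {N : Type*} [Fintype N]
    (v : Finset N → Prop) (hv : IsSimpleGame v) :
    ∃ k : ℕ, k ≤ {T : Finset N | IsMaxLosing v T}.ncard ∧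
      ∃ u : Fin k → (Finset N → Prop),
        (∀ l, IsWeighted (u l)) ∧ ∀ S : Finset N, v S ↔ ∀ l, u l S := by
  have hmono : Monotone v := fun S T hST => hv.1 S T hST
  set L := {T : Finset N | IsMaxLosing v T}
  have hL : L.Finite := Set.toFinite L
  let e := hL.toFinset.equivFin
  refine ⟨hL.toFinset.card, (Set.ncard_eq_toFinset_card L hL).ge,
    fun l S => ¬ S ⊆ e.symm l, fun l => isWeighted_not_subset _, fun S => ?_⟩
  rw [iff_forall_isMaxLosing_not_subset hmono]
  refine ⟨fun h l => h _ (hL.mem_toFinset.mp (e.symm l).2), fun h T hT => ?_⟩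
  simpa using h (e ⟨T, hL.mem_toFinset.mpr hT⟩)

/-- The dimension of a simple game is at most the number of its maximal losing
coalitions: there is a representation as the intersection of at most that many
weighted games. -/
theorem dimension_le_card_maximal_losing {N : Type*} [Fintype N] [DecidableEq N]
    (v : Finset N → Prop) (hv : IsSimpleGame v) :
    ∃ k : ℕ, k ≤ {T : Finset N | IsMaxLosing v T}.ncard ∧
      ∃ u : Fin k → (Finset N → Prop),
        (∀ l, IsWeighted (u l)) ∧ ∀ S : Finset N, v S ↔ ∀ l, u l S :=
  dimension_le_card_maximal_losing_general v hv
end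

section
/- For each maximal losing coalition T of a simple game v, the game u_T defined by weights w_i = 0 for i ∈ T, w_i = 1 for i ∉ T, and quota q = 1 is a weighted game in which T is losing and every winning coalition of v is winning; moreover v equals the intersection of the games u_T over all maximal losing coalitions T. -/
/-!
Weights `0` on `T` and `1` off `T` with quota `1` make `S` winning exactly when `S ⊄ T`.
A winning coalition of a monotone game is contained in no losing coalition, so it wins every
such game; conversely a losing coalition extends to a maximal losing one `T` (finitely many
coalitions), and then it loses the game attached to `T`.
-/

section

variable {N : Type*}

theorem sum_ite_mem_zero_one_eq_card_sdiff [DecidableEq N] (S T : Finset N) :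
    ∑ i ∈ S, (if i ∈ T then (0 : ℝ) else 1) = (S \ T).card := by
  rw [Finset.sum_ite, Finset.sum_const_zero, Finset.sum_const, zero_add, nsmul_one,
    Finset.filter_notMem_eq_sdiff]

theorem one_le_sum_ite_mem_iff_not_subset [DecidableEq N] (S T : Finset N) :
    (1 : ℝ) ≤ ∑ i ∈ S, (if i ∈ T then (0 : ℝ) else 1) ↔ ¬ S ⊆ T := by
  rw [sum_ite_mem_zero_one_eq_card_sdiff, Nat.one_le_cast, Nat.one_le_iff_ne_zero, Ne,
    Finset.card_eq_zero, Finset.sdiff_eq_empty_iff_subset]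

variable [Fintype N]

theorem isWeighted_one_le_sum_ite_mem [DecidableEq N] (T : Finset N) :
    IsWeighted (fun S : Finset N => (1 : ℝ) ≤ ∑ i ∈ S, if i ∈ T then (0 : ℝ) else 1) :=
  ⟨fun i => if i ∈ T then 0 else 1, 1, one_pos, fun _ => by positivity,
    fun _ => Iff.rfl⟩

variable {v : Finset N → Prop}

theorem IsMaxLosing.not_subset (hmono : ∀ S T : Finset N, S ⊆ T → v S → v T)
    {S T : Finset N} (hT : IsMaxLosing v T) (hS : v S) : ¬ S ⊆ T :=
  fun hST => hT.1 (hmono S T hST hS)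

theorem exists_isMaxLosing_superset {S : Finset N} (hS : ¬ v S) :
    ∃ T, S ⊆ T ∧ IsMaxLosing v T := by
  obtain ⟨T, hST, hT⟩ := (Set.toFinite {T : Finset N | ¬ v T}).exists_le_maximal hS
  exact ⟨T, hST, hT.prop, fun T' hTT' =>
    by_contra fun hT' => hTT'.not_ge (hT.le_of_ge hT' hTT'.le)⟩

theorem winning_iff_forall_isMaxLosing_not_subset
    (hmono : ∀ S T : Finset N, S ⊆ T → v S → v T) (S : Finset N) :
    v S ↔ ∀ T, IsMaxLosing v T → ¬ S ⊆ T := by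
  refine ⟨fun hS T hT => hT.not_subset hmono hS, fun h => by_contra fun hS => ?_⟩
  obtain ⟨T, hST, hT⟩ := exists_isMaxLosing_superset hS
  exact h T hT hST

end

/-- For each maximal losing coalition T, the game with weights 0 on T, 1 off T and
quota 1 is weighted, T is losing in it, every winning coalition of v is winning in it,
and v is the intersection of these games over all maximal losing coalitions. -/
theorem maximal_losing_intersection_representation {N : Type*} [Fintype N] [DecidableEq N]
    (v : Finset N → Prop) (hv : IsSimpleGame v) :
    (∀ T : Finset N, IsMaxLosing v T →
      (IsWeighted (fun S : Finset N => (1 : ℝ) ≤ ∑ i ∈ S, if i ∈ T then (0 : ℝ) else 1) ∧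
        ¬ ((1 : ℝ) ≤ ∑ i ∈ T, if i ∈ T then (0 : ℝ) else 1) ∧
        ∀ S : Finset N, v S → (1 : ℝ) ≤ ∑ i ∈ S, if i ∈ T then (0 : ℝ) else 1)) ∧
    (∀ S : Finset N, v S ↔
      ∀ T : Finset N, IsMaxLosing v T →
        (1 : ℝ) ≤ ∑ i ∈ S, if i ∈ T then (0 : ℝ) else 1) := by
  refine ⟨fun T hT => ⟨isWeighted_one_le_sum_ite_mem T, ?_, fun S hS => ?_⟩, fun S => ?_⟩
  · exact fun hT' => (one_le_sum_ite_mem_iff_not_subset T T).mp hT' subset_rfl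
  · exact (one_le_sum_ite_mem_iff_not_subset S T).mpr (hT.not_subset hv.1 hS)
  · simp only [one_le_sum_ite_mem_iff_not_subset]
    exact winning_iff_forall_isMaxLosing_not_subset hv.1 S
end

section
/- The complete simple game on 6 players whose maximal losing coalitions are exactly {1,3,5}, {1,3,6}, {1,4,5}, {1,4,6}, {2,3,5}, {2,3,6}, {2,4,5}, {2,4,6} is not weighted, witnessed by the 2-trade ⟨{1,2},{3,4,5,6}; {1,3,5},{2,4,6}⟩. -/
open Finset

section Trades

variable {N : Type*} [Fintype N] [DecidableEq N]

theorem sum_add_sum_eq_of_count_eq {M : Type*} [AddCommMonoid M] (w : N → M)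
    {S₁ S₂ T₁ T₂ : Finset N}
    (hcount : ∀ i, ((if i ∈ S₁ then 1 else 0) + (if i ∈ S₂ then 1 else 0) : ℕ) =
      (if i ∈ T₁ then 1 else 0) + (if i ∈ T₂ then 1 else 0)) :
    ∑ i ∈ S₁, w i + ∑ i ∈ S₂, w i = ∑ i ∈ T₁, w i + ∑ i ∈ T₂, w i := by
  have sum_eq (S : Finset N) : ∑ i ∈ S, w i = ∑ i, (if i ∈ S then 1 else 0 : ℕ) • w i := by
    simp only [ite_smul, one_smul, zero_smul, sum_ite_mem, univ_inter]
  simp only [sum_eq, ← sum_add_distrib, ← add_smul, hcount]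

theorem IsWeighted.not_twoTrade {v : Finset N → Prop} (hv : IsWeighted v)
    {S₁ S₂ T₁ T₂ : Finset N} (hS₁ : v S₁) (hS₂ : v S₂) (hT₁ : ¬ v T₁) (hT₂ : ¬ v T₂)
    (hcount : ∀ i, ((if i ∈ S₁ then 1 else 0) + (if i ∈ S₂ then 1 else 0) : ℕ) =
      (if i ∈ T₁ then 1 else 0) + (if i ∈ T₂ then 1 else 0)) :
    False := by
  obtain ⟨w, q, -, -, hvw⟩ := hv
  have hS : 2 * q ≤ ∑ i ∈ S₁, w i + ∑ i ∈ S₂, w i := by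
    linarith [(hvw S₁).1 hS₁, (hvw S₂).1 hS₂]
  have hT : ∑ i ∈ T₁, w i + ∑ i ∈ T₂, w i < 2 * q := by
    linarith [not_le.1 (mt (hvw T₁).2 hT₁), not_le.1 (mt (hvw T₂).2 hT₂)]
  exact (sum_add_sum_eq_of_count_eq w hcount ▸ hS).not_gt hT

end Trades

/-- The complete simple game on 6 players (0-indexed) with the eight listed maximal
losing coalitions is not weighted; witness: the 2-trade
⟨{0,1},{2,3,4,5}; {0,2,4},{1,3,5}⟩. -/
theorem example_game_not_weighted :
    let L : Finset (Finset (Fin 6)) :=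
      {{0,2,4}, {0,2,5}, {0,3,4}, {0,3,5}, {1,2,4}, {1,2,5}, {1,3,4}, {1,3,5}}
    let v : Finset (Fin 6) → Prop := fun S => ¬ ∃ T ∈ L, S ⊆ T
    v {0,1} ∧ v {2,3,4,5} ∧ ¬ v {0,2,4} ∧ ¬ v {1,3,5} ∧
    (∀ i : Fin 6,
      ((if i ∈ ({0,1} : Finset (Fin 6)) then 1 else 0) +
        (if i ∈ ({2,3,4,5} : Finset (Fin 6)) then 1 else 0) : ℕ) =
      (if i ∈ ({0,2,4} : Finset (Fin 6)) then 1 else 0) +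
        (if i ∈ ({1,3,5} : Finset (Fin 6)) then 1 else 0)) ∧
    ¬ IsWeighted v := by
  intro L v
  have hS₁ : v {0,1} := by decide
  have hS₂ : v {2,3,4,5} := by decide
  have hT₁ : ¬ v {0,2,4} := by decide
  have hT₂ : ¬ v {1,3,5} := by decide
  have hcount : ∀ i : Fin 6,
      ((if i ∈ ({0,1} : Finset (Fin 6)) then 1 else 0) +
        (if i ∈ ({2,3,4,5} : Finset (Fin 6)) then 1 else 0) : ℕ) =
      (if i ∈ ({0,2,4} : Finset (Fin 6)) then 1 else 0) +
        (if i ∈ ({1,3,5} : Finset (Fin 6)) then 1 else 0) := by decide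
  exact ⟨hS₁, hS₂, hT₁, hT₂, hcount, fun hv => hv.not_twoTrade hS₁ hS₂ hT₁ hT₂ hcount⟩
end

section
/- Suppose v is a simple game with losing coalitions T_1,...,T_k such that for every pair i ≠ j there is no weighted game in which all winning coalitions of v are winning and both T_i and T_j are losing. If v equals the intersection of m weighted games, then m ≥ k. -/
/-
Each losing coalition `T i` of `v` must be losing in some game of the representation; choosing
one such game for every `i` gives a map `Fin k → Fin m`. It is injective: if `T i` and `T j`
were both losing in the same game `u l`, that game would contain all winning coalitions of
`v`, contradicting incompatibility.
-/

theorem card_le_of_pairwise_incompatible {α ι κ : Type*} [Fintype ι] [Fintype κ]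
    (P : (α → Prop) → Prop) (v : α → Prop) (u : κ → α → Prop) (hu : ∀ l, P (u l))
    (hrep : ∀ S, v S ↔ ∀ l, u l S) (T : ι → α) (hT : ∀ i, ¬ v (T i))
    (hpair : ∀ i j, i ≠ j →
      ¬ ∃ w : α → Prop, P w ∧ (∀ S, v S → w S) ∧ ¬ w (T i) ∧ ¬ w (T j)) :
    Fintype.card ι ≤ Fintype.card κ := by
  have losing_somewhere : ∀ i, ∃ l, ¬ u l (T i) := fun i => by simpa [hrep] using hT i
  choose f hf using losing_somewhere
  refine Fintype.card_le_of_injective f fun i j hij => ?_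
  by_contra hne
  exact hpair i j hne
    ⟨u (f i), hu (f i), fun S hS => (hrep S).mp hS (f i), hf i, hij ▸ hf j⟩

theorem pairwise_incompatible_lower_bound_general {N : Type*} [Fintype N]
    (v : Finset N → Prop)
    (k : ℕ) (T : Fin k → Finset N) (hT : ∀ i, ¬ v (T i))
    (hpair : ∀ i j : Fin k, i ≠ j →
      ¬ ∃ u : Finset N → Prop, IsWeighted u ∧
        (∀ S : Finset N, v S → u S) ∧ ¬ u (T i) ∧ ¬ u (T j))
    (m : ℕ) (u : Fin m → (Finset N → Prop))
    (hu : ∀ l, IsWeighted (u l))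
    (hrep : ∀ S : Finset N, v S ↔ ∀ l, u l S) :
    k ≤ m := by
  simpa using card_le_of_pairwise_incompatible IsWeighted v u hu hrep T hT hpair

/-- If v has k losing coalitions which are pairwise incompatible (no weighted game
keeps all winning coalitions of v winning while both are losing), then any
representation of v as an intersection of m weighted games has m ≥ k. -/
theorem pairwise_incompatible_lower_bound {N : Type*} [Fintype N] [DecidableEq N]
    (v : Finset N → Prop) (hv : IsSimpleGame v)
    (k : ℕ) (T : Fin k → Finset N) (hT : ∀ i, ¬ v (T i))
    (hpair : ∀ i j : Fin k, i ≠ j →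
      ¬ ∃ u : Finset N → Prop, IsWeighted u ∧
        (∀ S : Finset N, v S → u S) ∧ ¬ u (T i) ∧ ¬ u (T j))
    (m : ℕ) (u : Fin m → (Finset N → Prop))
    (hu : ∀ l, IsWeighted (u l))
    (hrep : ∀ S : Finset N, v S ↔ ∀ l, u l S) :
    k ≤ m :=
  pairwise_incompatible_lower_bound_general v k T hT hpair m u hu hrep
end

section
/- If there exist winning coalitions S_1, S_2 of a simple game v and losing coalitions T_i, T_j such that every player appears in exactly as many of S_1, S_2 as of T_i, T_j, then there is no weighted game u in which every winning coalition of v is winning and both T_i and T_j are losing. -/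
/-! Counting with multiplicity, a trade preserves the total weight of the coalitions on each side,
which is at least `2q` for two winning coalitions and below `2q` for two losing ones. -/

theorem Finset.sum_eq_sum_boole_smul {N M : Type*} [Fintype N] [DecidableEq N] [AddCommMonoid M]
    (S : Finset N) (w : N → M) :
    ∑ i ∈ S, w i = ∑ i, (if i ∈ S then 1 else 0 : ℕ) • w i := by
  simp [ite_smul, Finset.sum_ite_mem]

theorem Finset.sum_add_sum_eq_of_trade {N M : Type*} [Fintype N] [DecidableEq N]
    [AddCommMonoid M] {S₁ S₂ T₁ T₂ : Finset N} (w : N → M)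
    (htrade : ∀ i : N,
      ((if i ∈ S₁ then 1 else 0) + (if i ∈ S₂ then 1 else 0) : ℕ) =
      (if i ∈ T₁ then 1 else 0) + (if i ∈ T₂ then 1 else 0)) :
    ∑ i ∈ S₁, w i + ∑ i ∈ S₂, w i = ∑ i ∈ T₁, w i + ∑ i ∈ T₂, w i := by
  simp only [Finset.sum_eq_sum_boole_smul _ w, ← Finset.sum_add_distrib, ← add_smul, htrade]

theorem IsWeighted.left_or_right_of_trade {N : Type*} [Fintype N] [DecidableEq N]
    {u : Finset N → Prop} (hu : IsWeighted u) {S₁ S₂ T₁ T₂ : Finset N} (hS₁ : u S₁) (hS₂ : u S₂)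
    (htrade : ∀ i : N,
      ((if i ∈ S₁ then 1 else 0) + (if i ∈ S₂ then 1 else 0) : ℕ) =
      (if i ∈ T₁ then 1 else 0) + (if i ∈ T₂ then 1 else 0)) :
    u T₁ ∨ u T₂ := by
  obtain ⟨w, q, -, -, hw⟩ := hu
  simp only [hw] at hS₁ hS₂ ⊢
  by_contra! hlosing
  have hsum := Finset.sum_add_sum_eq_of_trade w htrade
  linarith [hlosing.1, hlosing.2]

theorem two_trade_incompatibility_general {N : Type*} [Fintype N] [DecidableEq N]
    (v : Finset N → Prop)
    (S₁ S₂ Ti Tj : Finset N) (hS₁ : v S₁) (hS₂ : v S₂)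
    (htrade : ∀ i : N,
      ((if i ∈ S₁ then 1 else 0) + (if i ∈ S₂ then 1 else 0) : ℕ) =
      (if i ∈ Ti then 1 else 0) + (if i ∈ Tj then 1 else 0)) :
    ¬ ∃ u : Finset N → Prop, IsWeighted u ∧
      (∀ S : Finset N, v S → u S) ∧ ¬ u Ti ∧ ¬ u Tj := by
  rintro ⟨u, hu, hvu, hui, huj⟩
  exact (hu.left_or_right_of_trade (hvu S₁ hS₁) (hvu S₂ hS₂) htrade).elim hui huj

/-- A 2-trade between two winning coalitions of v and two losing coalitions Tᵢ, Tⱼ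
certifies that no weighted game keeps all winning coalitions of v winning while
having both Tᵢ and Tⱼ losing. -/
theorem two_trade_incompatibility {N : Type*} [Fintype N] [DecidableEq N]
    (v : Finset N → Prop) (hv : IsSimpleGame v)
    (S₁ S₂ Ti Tj : Finset N) (hS₁ : v S₁) (hS₂ : v S₂)
    (hTi : ¬ v Ti) (hTj : ¬ v Tj)
    (htrade : ∀ i : N,
      ((if i ∈ S₁ then 1 else 0) + (if i ∈ S₂ then 1 else 0) : ℕ) =
      (if i ∈ Ti then 1 else 0) + (if i ∈ Tj then 1 else 0)) :
    ¬ ∃ u : Finset N → Prop, IsWeighted u ∧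
      (∀ S : Finset N, v S → u S) ∧ ¬ u Ti ∧ ¬ u Tj :=
  two_trade_incompatibility_general v S₁ S₂ Ti Tj hS₁ hS₂ htrade
end
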